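/- Let (F : C → D, U : D → C) be a comonoidal adjunction between monoidal categories (i.e., F and U are comonoidal functors and the unit and counit are comonoidal natural transformations). Then the comonoidal structure morphisms U_2(X,Y) : U(X ⊗ Y) → U(X) ⊗ U(Y) and U_0 : U(𝟙) → 𝟙 are isomorphisms; i.e., U is a strong (co)monoidal functor. -/

import Mathlib

open CategoryTheory MonoidalCategory Functor.OplaxMonoidal

/-!
Both structure maps of `U` are inverted by the mates of the structure maps of `F`:
`U₀⁻¹ = η_𝟙 ≫ U(F₀)` and `U₂(X,Y)⁻¹ = η ≫ U(F₂(UX,UY) ≫ (ε_X ⊗ ε_Y))`.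
One composite is the identity by comonoidality of the counit and a triangle identity,
the other by comonoidality of the unit, naturality of `U₂` and a triangle identity.
-/

namespace CategoryTheory.Adjunction

variable {C D : Type*} [Category C] [Category D] {F : C ⥤ D} {U : D ⥤ C}

lemma isIso_of_map_comp_eq_counit (adj : F ⊣ U) {A : D} {B : C} (f : U.obj A ⟶ B)
    (g : F.obj B ⟶ A) (hε : F.map f ≫ g = adj.counit.app A)
    (hη : adj.unit.app B ≫ U.map g ≫ f = 𝟙 B) : IsIso f := by
  refine ⟨⟨adj.unit.app B ≫ U.map g, ?_, by simpa using hη⟩⟩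
  calc f ≫ adj.unit.app B ≫ U.map g
      = adj.unit.app (U.obj A) ≫ U.map (F.map f ≫ g) := by simp
    _ = 𝟙 (U.obj A) := by rw [hε, adj.right_triangle_components]

variable [MonoidalCategory C] [MonoidalCategory D] [F.OplaxMonoidal] [U.OplaxMonoidal]

lemma unit_comp_map_δ_counit_comp_δ (adj : F ⊣ U) (X Y : D)
    (h : adj.unit.app (U.obj X ⊗ U.obj Y) ≫ U.map (δ F (U.obj X) (U.obj Y)) ≫
        δ U (F.obj (U.obj X)) (F.obj (U.obj Y)) =
      adj.unit.app (U.obj X) ⊗ₘ adj.unit.app (U.obj Y)) :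
    adj.unit.app (U.obj X ⊗ U.obj Y) ≫
        U.map (δ F (U.obj X) (U.obj Y) ≫ (adj.counit.app X ⊗ₘ adj.counit.app Y)) ≫
          δ U X Y = 𝟙 _ := by
  calc _ = (adj.unit.app (U.obj X ⊗ U.obj Y) ≫ U.map (δ F (U.obj X) (U.obj Y)) ≫
          δ U (F.obj (U.obj X)) (F.obj (U.obj Y))) ≫
            (U.map (adj.counit.app X) ⊗ₘ U.map (adj.counit.app Y)) := by
        rw [Category.assoc, Category.assoc, δ_natural, Functor.map_comp, Category.assoc]
        rfl
    _ = 𝟙 _ := by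
        rw [h, tensorHom_comp_tensorHom, adj.right_triangle_components,
          adj.right_triangle_components]
        exact id_tensorHom_id _ _

end CategoryTheory.Adjunction

/-- Let `(F : C → D, U : D → C)` be a comonoidal adjunction between monoidal
categories, i.e. `F` and `U` are comonoidal (oplax monoidal) functors and the unit
and counit of the adjunction are comonoidal natural transformations. Then the
comonoidal structure morphisms `U₂(X,Y) : U(X ⊗ Y) → U(X) ⊗ U(Y)` and
`U₀ : U(𝟙) → 𝟙` are isomorphisms, i.e. `U` is a strong (co)monoidal functor. -/
theorem right_adjoint_of_comonoidal_adjunction_is_strong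
    {C D : Type*} [Category C] [Category D] [MonoidalCategory C] [MonoidalCategory D]
    (F : C ⥤ D) (U : D ⥤ C) [F.OplaxMonoidal] [U.OplaxMonoidal] (adj : F ⊣ U)
    (unit_tensor : ∀ X Y : C,
      adj.unit.app (X ⊗ Y) ≫ U.map (δ F X Y) ≫ δ U (F.obj X) (F.obj Y) =
        adj.unit.app X ⊗ₘ adj.unit.app Y)
    (unit_unit : adj.unit.app (𝟙_ C) ≫ U.map (η F) ≫ η U = 𝟙 (𝟙_ C))
    (counit_tensor : ∀ X Y : D,
      adj.counit.app (X ⊗ Y) =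
        F.map (δ U X Y) ≫ δ F (U.obj X) (U.obj Y) ≫
          (adj.counit.app X ⊗ₘ adj.counit.app Y))
    (counit_unit : adj.counit.app (𝟙_ D) = F.map (η U) ≫ η F) :
    IsIso (η U) ∧ ∀ X Y : D, IsIso (δ U X Y) :=
  ⟨adj.isIso_of_map_comp_eq_counit (η U) (η F) counit_unit.symm unit_unit,
    fun X Y => adj.isIso_of_map_comp_eq_counit (δ U X Y) _ (counit_tensor X Y).symm
      (adj.unit_comp_map_δ_counit_comp_δ X Y (unit_tensor _ _))⟩
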